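/- For any long positive root μ, the inversion set of the inverse of the minimal-length element w_{θ,μ} ∈ W taking the highest root θ to μ is N(w_{θ,μ}⁻¹) = {ν ∈ Δ⁺ | (ν, μ∨) = −1}. -/

import Mathlib

open scoped RealInnerProductSpace

/-- Data of a crystallographic root system in a real inner product space `V`,
with simple roots indexed by a finite type `ι`. -/
structure RSD (ι V : Type*) [Fintype ι] [NormedAddCommGroup V]
    [InnerProductSpace ℝ V] where
  /-- The simple roots. -/
  sroot : ι → V
  /-- The set of roots. -/
  Δ : Set V
  finite : Δ.Finite
  zero_not_mem : (0 : V) ∉ Δ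
  sroot_mem : ∀ i, sroot i ∈ Δ
  sroot_indep : LinearIndependent ℝ sroot
  neg_mem : ∀ a ∈ Δ, -a ∈ Δ
  /-- Crystallographic condition. -/
  crys : ∀ a ∈ Δ, ∀ b ∈ Δ, ∃ n : ℤ, 2 * ⟪a, b⟫ / ⟪a, a⟫ = (n : ℝ)
  /-- The reflection associated with a vector (only specified on roots). -/
  reflect : V → (V ≃ₗ[ℝ] V)
  reflect_apply : ∀ a ∈ Δ, ∀ v : V,
    reflect a v = v - (2 * ⟪a, v⟫ / ⟪a, a⟫) • a
  reflect_root_mem : ∀ a ∈ Δ, ∀ b ∈ Δ, reflect a b ∈ Δ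
  /-- Every root is a nonnegative or nonpositive integral combination of simple roots. -/
  decomp : ∀ a ∈ Δ, (∃ c : ι → ℕ, a = ∑ i, (c i : ℝ) • sroot i) ∨
      (∃ c : ι → ℕ, a = -∑ i, (c i : ℝ) • sroot i)
  /-- Irreducibility. -/
  irred : ∀ S T : Set V, S ∪ T = Δ → (∀ a ∈ S, ∀ b ∈ T, ⟪a, b⟫ = 0) →
      S = ∅ ∨ T = ∅

namespace RSD

variable {ι V : Type*} [Fintype ι] [NormedAddCommGroup V] [InnerProductSpace ℝ V]
  (R : RSD ι V)

/-- The set of positive roots. -/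
def pos : Set V := {a ∈ R.Δ | ∃ c : ι → ℕ, a = ∑ i, (c i : ℝ) • R.sroot i}

/-- `R.le μ γ` means `μ ≼ γ`, i.e. `γ - μ` is a nonnegative integral combination
of simple roots. -/
def le (μ γ : V) : Prop := ∃ c : ι → ℕ, γ - μ = ∑ i, (c i : ℝ) • R.sroot i

/-- The Weyl group, generated by the simple reflections. -/
def W : Subgroup (V ≃ₗ[ℝ] V) :=
  Subgroup.closure (Set.range fun i => R.reflect (R.sroot i))

/-- The inversion set `N(w) = {γ ∈ Δ⁺ ∣ w γ ∈ -Δ⁺}`. -/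
def N (w : V ≃ₗ[ℝ] V) : Set V := {γ ∈ R.pos | -(w γ) ∈ R.pos}

/-- The length of `w`: minimal length of an expression of `w` as a product of
simple reflections. -/
noncomputable def len (w : V ≃ₗ[ℝ] V) : ℕ :=
  sInf {n | ∃ l : List ι, l.length = n ∧
    (l.map fun i => R.reflect (R.sroot i)).prod = w}

/-- The coroot `a∨ = 2a/(a,a)`. -/
@[nolint unusedArguments]
noncomputable def coroot (_R : RSD ι V) (a : V) : V := (2 / ⟪a, a⟫) • a

/-- `ρ`, the half-sum of the positive roots. -/
noncomputable def rho : V :=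
  (2⁻¹ : ℝ) • ∑ a ∈ (R.finite.subset (fun a ha => ha.1 : R.pos ⊆ R.Δ)).toFinset, a

/-- `R.HtIs γ n` : the height of `γ` is `n`. -/
def HtIs (γ : V) (n : ℕ) : Prop :=
  ∃ c : ι → ℕ, γ = ∑ i, (c i : ℝ) • R.sroot i ∧ ∑ i, c i = n

/-- A long root: a root of maximal squared length. -/
def IsLong (γ : V) : Prop := γ ∈ R.Δ ∧ ∀ b ∈ R.Δ, ⟪b, b⟫ ≤ ⟪γ, γ⟫

/-- The highest root. -/
def IsHighest (θ : V) : Prop := θ ∈ R.pos ∧ ∀ γ ∈ R.pos, R.le γ θ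

/-- Simply-laced: all roots have the same length. -/
def SimplyLaced : Prop := ∀ a ∈ R.Δ, ∀ b ∈ R.Δ, ⟪a, a⟫ = ⟪b, b⟫

/-- A minimal inversion complete set. -/
def IsMICS (F : Set (V ≃ₗ[ℝ] V)) : Prop :=
  (∀ w ∈ F, w ∈ R.W) ∧ (⋃ w ∈ F, R.N w) = R.pos ∧
    ∀ F' ⊂ F, (⋃ w ∈ F', R.N w) ≠ R.pos

end RSD

/-! If `ν ∈ N(w⁻¹)`, then `γ = -w⁻¹ν` is a positive root, so `(ν, μ) = -(γ, θ) ≤ 0` because `θ` is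
highest; since `μ` is long and `ν ≠ -μ`, the integer `(ν, μ∨)` is `0` or `-1`. It is not `0`: then
`s_ν` fixes `μ`, so `s_ν w` also sends `θ` to `μ`, and it is shorter than `w` because `ν` is an
inversion of `w⁻¹` (deletion argument on a reduced word). Conversely, `(ν, μ∨) = -1` gives
`(w⁻¹ν, θ) = (ν, μ) < 0`, which no positive root satisfies, so `w⁻¹ν` is negative. -/

namespace RSD

variable {ι V : Type*} [Fintype ι] [NormedAddCommGroup V] [InnerProductSpace ℝ V]
  (R : RSD ι V)

lemma ne_zero_of_mem {a : V} (ha : a ∈ R.Δ) : a ≠ 0 := fun h => R.zero_not_mem (h ▸ ha)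

lemma inner_self_pos_of_mem {a : V} (ha : a ∈ R.Δ) : 0 < ⟪a, a⟫ :=
  real_inner_self_pos.2 (R.ne_zero_of_mem ha)

lemma inner_coroot (a x : V) : ⟪x, R.coroot a⟫ = 2 * ⟪a, x⟫ / ⟪a, a⟫ := by
  rw [coroot, real_inner_smul_right, real_inner_comm a x]
  ring

lemma pos_or_neg_mem_pos {a : V} (ha : a ∈ R.Δ) : a ∈ R.pos ∨ -a ∈ R.pos := by
  rcases R.decomp a ha with ⟨c, hc⟩ | ⟨c, hc⟩
  · exact Or.inl ⟨ha, c, hc⟩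
  · exact Or.inr ⟨R.neg_mem a ha, c, by rw [hc, neg_neg]⟩

lemma neg_notMem_pos {a : V} (ha : a ∈ R.pos) : -a ∉ R.pos := by
  rintro ⟨-, e, he⟩
  obtain ⟨haΔ, c, hc⟩ := ha
  have hsum : ∑ i, ((c i : ℝ) + e i) • R.sroot i = ∑ i, (0 : ℝ) • R.sroot i := by
    simp only [add_smul, Finset.sum_add_distrib, ← hc, ← he, add_neg_cancel, zero_smul,
      Finset.sum_const_zero]
  have hc0 : ∀ i, c i = 0 := fun i => by
    have := Fintype.linearIndependent_iffₛ.1 R.sroot_indep _ _ hsum i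
    have : c i + e i = 0 := by exact_mod_cast this
    omega
  exact R.ne_zero_of_mem haΔ (by simp [hc, hc0])

lemma add_mem_pos {a b : V} (ha : a ∈ R.pos) (hb : b ∈ R.pos) (hab : a + b ∈ R.Δ) :
    a + b ∈ R.pos := by
  obtain ⟨-, c, rfl⟩ := ha
  obtain ⟨-, d, rfl⟩ := hb
  exact ⟨hab, c + d, by simp only [Pi.add_apply, Nat.cast_add, add_smul, Finset.sum_add_distrib]⟩

lemma add_mem_or_inner_le_neg {a b : V} (ha : a ∈ R.Δ) (hb : b ∈ R.Δ) (hab : ⟪a, b⟫ < 0) :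
    a + b ∈ R.Δ ∨ ⟪a, b⟫ ≤ -⟪b, b⟫ := by
  have hbb := R.inner_self_pos_of_mem hb
  obtain ⟨n, hn⟩ := R.crys b hb a ha
  have hn' : 2 * ⟪a, b⟫ = n * ⟪b, b⟫ := by
    rw [← hn, real_inner_comm]; field_simp
  have hneg : n < 0 := by
    have : (n : ℝ) < 0 := by nlinarith
    exact_mod_cast this
  rcases (show n = -1 ∨ n ≤ -2 by omega) with rfl | h
  · left
    have hmem := R.reflect_root_mem b hb a ha
    rwa [R.reflect_apply b hb a, hn, Int.cast_neg, Int.cast_one, neg_one_smul,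
      sub_neg_eq_add] at hmem
  · right
    have : (n : ℝ) ≤ -2 := by exact_mod_cast h
    nlinarith

lemma add_mem_of_inner_neg {a b : V} (ha : a ∈ R.Δ) (hb : b ∈ R.Δ) (hab : ⟪a, b⟫ < 0)
    (hne : a ≠ -b) : a + b ∈ R.Δ := by
  rcases R.add_mem_or_inner_le_neg ha hb hab with h | hb'
  · exact h
  rcases R.add_mem_or_inner_le_neg hb ha (by rwa [real_inner_comm]) with h | ha'
  · rwa [add_comm]
  -- if neither `s_b a` nor `s_a b` is `a + b`, then `‖a + b‖² ≤ 0`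
  have : ⟪a + b, a + b⟫ ≤ 0 := by
    rw [real_inner_add_add_self]
    linarith [real_inner_comm a b]
  exact absurd (eq_neg_of_add_eq_zero_left (real_inner_self_nonpos.1 this)) hne

variable {R} in
lemma IsLong.inner_lt {μ ν : V} (hμ : R.IsLong μ) (hν : ν ∈ R.Δ) (hne : ν ≠ μ) :
    ⟪ν, μ⟫ < ⟪μ, μ⟫ := by
  by_contra! h
  have : ⟪ν - μ, ν - μ⟫ ≤ 0 := by
    rw [real_inner_sub_sub_self]
    linarith [hμ.2 ν hν]
  exact hne (sub_eq_zero.1 (real_inner_self_nonpos.1 this))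

variable {R} in
lemma IsHighest.inner_nonneg {θ γ : V} (hθ : R.IsHighest θ) (hγ : γ ∈ R.pos) : 0 ≤ ⟪γ, θ⟫ := by
  by_contra! h
  have hne : γ ≠ -θ := fun he => R.neg_notMem_pos hθ.1 (he ▸ hγ)
  have hsum := R.add_mem_pos hγ hθ.1 (R.add_mem_of_inner_neg hγ.1 hθ.1.1 h hne)
  obtain ⟨e, he⟩ := hθ.2 _ hsum
  exact R.neg_notMem_pos hγ ⟨R.neg_mem γ hγ.1, e, by rw [← he]; abel⟩

lemma inner_coroot_eq_zero_or_eq_neg_one {μ ν : V} (hμ : R.IsLong μ) (hν : ν ∈ R.Δ)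
    (hne : ν ≠ -μ) (hle : ⟪ν, μ⟫ ≤ 0) :
    ⟪ν, R.coroot μ⟫ = 0 ∨ ⟪ν, R.coroot μ⟫ = -1 := by
  have hμμ := R.inner_self_pos_of_mem hμ.1
  have hlt := hμ.inner_lt (R.neg_mem ν hν) (fun h => hne (by rw [← h, neg_neg]))
  obtain ⟨n, hn⟩ := R.crys μ hμ.1 ν hν
  rw [R.inner_coroot, hn]
  rw [inner_neg_left, real_inner_comm] at hlt
  rw [real_inner_comm] at hle
  have hle' : n ≤ 0 := by
    have : (n : ℝ) ≤ 0 := by rw [← hn]; exact div_nonpos_of_nonpos_of_nonneg (by linarith) hμμ.le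
    exact_mod_cast this
  have hgt : -2 < n := by
    have : (-2 : ℝ) < n := by rw [← hn, lt_div_iff₀ hμμ]; linarith
    exact_mod_cast this
  rcases (show n = 0 ∨ n = -1 by omega) with rfl | rfl <;> simp

lemma reflect_reflect {a : V} (ha : a ∈ R.Δ) (v : V) : R.reflect a (R.reflect a v) = v := by
  have haa := (R.inner_self_pos_of_mem ha).ne'
  rw [R.reflect_apply a ha v, R.reflect_apply a ha, inner_sub_right, real_inner_smul_right]
  have hcoeff :
      2 * (⟪a, v⟫ - 2 * ⟪a, v⟫ / ⟪a, a⟫ * ⟪a, a⟫) / ⟪a, a⟫ = -(2 * ⟪a, v⟫ / ⟪a, a⟫) := by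
    field_simp
    ring
  rw [hcoeff, neg_smul, sub_neg_eq_add, sub_add_cancel]

lemma reflect_mul_self {a : V} (ha : a ∈ R.Δ) : R.reflect a * R.reflect a = 1 :=
  LinearEquiv.ext (R.reflect_reflect ha)

lemma reflect_inv {a : V} (ha : a ∈ R.Δ) : (R.reflect a)⁻¹ = R.reflect a :=
  inv_eq_of_mul_eq_one_right (R.reflect_mul_self ha)

lemma reflect_smul {a : V} (ha : a ∈ R.Δ) {c : ℝ} (hc : c ≠ 0) (hca : c • a ∈ R.Δ) :
    R.reflect (c • a) = R.reflect a := by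
  have haa := (R.inner_self_pos_of_mem ha).ne'
  ext v
  rw [R.reflect_apply _ hca, R.reflect_apply _ ha, real_inner_smul_left, real_inner_smul_left,
    real_inner_smul_right, smul_smul]
  congr 2
  field_simp

lemma reflect_sroot_mem_W (i : ι) : R.reflect (R.sroot i) ∈ R.W :=
  Subgroup.subset_closure ⟨i, rfl⟩

lemma inner_map_map_of_mem_W {w : V ≃ₗ[ℝ] V} (hw : w ∈ R.W) (x y : V) :
    ⟪w x, w y⟫ = ⟪x, y⟫ := by
  induction hw using Subgroup.closure_induction'' generalizing x y with
  | mem _ h | inv_mem _ h =>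
    obtain ⟨i, rfl⟩ := h
    have hi := R.sroot_mem i
    have hii := (R.inner_self_pos_of_mem hi).ne'
    simp only [R.reflect_inv hi, R.reflect_apply _ hi, inner_sub_left, inner_sub_right,
      real_inner_smul_left, real_inner_smul_right, real_inner_comm (R.sroot i)]
    field_simp
    ring
  | one => rfl
  | mul u v _ _ hu hv => rw [LinearEquiv.mul_apply, LinearEquiv.mul_apply, hu, hv]

lemma map_mem_of_mem_W {w : V ≃ₗ[ℝ] V} (hw : w ∈ R.W) {a : V} (ha : a ∈ R.Δ) : w a ∈ R.Δ := by
  induction hw using Subgroup.closure_induction'' generalizing a with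
  | mem _ h | inv_mem _ h =>
    obtain ⟨i, rfl⟩ := h
    simp only [R.reflect_inv (R.sroot_mem i)]
    exact R.reflect_root_mem _ (R.sroot_mem i) a ha
  | one => exact ha
  | mul u v _ _ hu hv => exact hu (hv ha)

lemma reflect_map_of_mem_W {w : V ≃ₗ[ℝ] V} (hw : w ∈ R.W) {a : V} (ha : a ∈ R.Δ) :
    R.reflect (w a) = w * R.reflect a * w⁻¹ := by
  have hwa := R.map_mem_of_mem_W hw ha
  ext v
  obtain ⟨u, rfl⟩ := w.surjective v
  simp only [LinearEquiv.mul_apply, LinearEquiv.coe_inv, LinearEquiv.symm_apply_apply,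
    R.reflect_apply _ hwa, R.reflect_apply _ ha, map_sub, map_smul,
    R.inner_map_map_of_mem_W hw]

def wordProd (l : List ι) : V ≃ₗ[ℝ] V := (l.map fun i => R.reflect (R.sroot i)).prod

@[simp]
lemma wordProd_nil : R.wordProd [] = 1 := rfl

@[simp]
lemma wordProd_cons (i : ι) (l : List ι) :
    R.wordProd (i :: l) = R.reflect (R.sroot i) * R.wordProd l :=
  List.prod_cons

@[simp]
lemma wordProd_append (l l' : List ι) : R.wordProd (l ++ l') = R.wordProd l * R.wordProd l' := by
  simp [wordProd]

lemma wordProd_mem_W (l : List ι) : R.wordProd l ∈ R.W := by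
  induction l with
  | nil => exact one_mem _
  | cons i l ih => exact R.wordProd_cons i l ▸ mul_mem (R.reflect_sroot_mem_W i) ih

lemma exists_wordProd_eq {w : V ≃ₗ[ℝ] V} (hw : w ∈ R.W) : ∃ l, R.wordProd l = w := by
  induction hw using Subgroup.closure_induction'' with
  | mem _ h | inv_mem _ h =>
    obtain ⟨i, rfl⟩ := h
    exact ⟨[i], by simp [R.reflect_inv (R.sroot_mem i)]⟩
  | one => exact ⟨[], rfl⟩
  | mul u v _ _ hu hv =>
    obtain ⟨l, rfl⟩ := hu
    obtain ⟨l', rfl⟩ := hv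
    exact ⟨l ++ l', R.wordProd_append l l'⟩

lemma len_le_length {w : V ≃ₗ[ℝ] V} {l : List ι} (h : R.wordProd l = w) :
    R.len w ≤ l.length :=
  Nat.sInf_le ⟨l, rfl, h⟩

lemma exists_wordProd_eq_length_eq_len {w : V ≃ₗ[ℝ] V} (hw : w ∈ R.W) :
    ∃ l, R.wordProd l = w ∧ l.length = R.len w := by
  obtain ⟨l, hl⟩ := R.exists_wordProd_eq hw
  obtain ⟨l', hlen, hl'⟩ := Nat.sInf_mem (⟨l.length, l, rfl, hl⟩ :
    {n | ∃ l : List ι, l.length = n ∧ R.wordProd l = w}.Nonempty)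
  exact ⟨l', hl', hlen⟩

lemma exists_eq_smul_sroot_of_reflect_notMem_pos {i : ι} {ν : V} (hν : ν ∈ R.pos)
    (h : R.reflect (R.sroot i) ν ∉ R.pos) : ∃ c : ℝ, c ≠ 0 ∧ ν = c • R.sroot i := by
  classical
  have hi := R.sroot_mem i
  obtain ⟨hνΔ, c, hc⟩ := hν
  obtain ⟨-, e, he⟩ :=
    (R.pos_or_neg_mem_pos (R.reflect_root_mem _ hi ν hνΔ)).resolve_left (hc ▸ h)
  -- `ν - s_i ν` is a multiple of `α_i` with nonnegative coefficients `c j + e j`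
  have hsum : ∑ j, ((c j : ℝ) + e j) • R.sroot j =
      ∑ j, (Pi.single i (2 * ⟪R.sroot i, ν⟫ / ⟪R.sroot i, R.sroot i⟫) : ι → ℝ) j • R.sroot j := by
    simp only [add_smul, Finset.sum_add_distrib, ← hc, ← he, R.reflect_apply _ hi]
    simp [Pi.single_apply]
  have hcj : ∀ j ≠ i, c j = 0 := fun j hj => by
    have := Fintype.linearIndependent_iffₛ.1 R.sroot_indep _ _ hsum j
    rw [Pi.single_eq_of_ne hj] at this
    have : c j + e j = 0 := by exact_mod_cast this
    omega
  have hνi : ν = (c i : ℝ) • R.sroot i := by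
    rw [hc, Fintype.sum_eq_single i fun j hj => by rw [hcj j hj, Nat.cast_zero, zero_smul]]
  refine ⟨c i, fun h0 => R.ne_zero_of_mem hνΔ ?_, hνi⟩
  rw [hνi, h0, zero_smul]

lemma exists_length_lt_wordProd_eq_reflect_mul (l : List ι) {ν : V} (hν : ν ∈ R.pos)
    (hinv : -((R.wordProd l)⁻¹ ν) ∈ R.pos) :
    ∃ l' : List ι, l'.length < l.length ∧ R.wordProd l' = R.reflect ν * R.wordProd l := by
  induction l generalizing ν with
  | nil => exact absurd hinv (R.neg_notMem_pos hν)
  | cons i l ih =>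
    have hi := R.sroot_mem i
    set s := R.reflect (R.sroot i)
    by_cases hβ : s ν ∈ R.pos
    · have happ : (R.wordProd (i :: l))⁻¹ ν = (R.wordProd l)⁻¹ (s ν) := by
        simp [s, mul_inv_rev, R.reflect_inv hi]
      obtain ⟨l', hlen, hl'⟩ := ih hβ (happ ▸ hinv)
      have hconj : R.reflect ν = s * R.reflect (s ν) * s := by
        have := R.reflect_map_of_mem_W (R.reflect_sroot_mem_W i) hβ.1
        rwa [R.reflect_reflect hi, R.reflect_inv hi] at this
      refine ⟨i :: l', by simpa using hlen, ?_⟩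
      rw [wordProd_cons, wordProd_cons, hl', hconj, mul_assoc (s * _), ← mul_assoc s s,
        R.reflect_mul_self hi, one_mul, mul_assoc]
    · obtain ⟨c, hc, rfl⟩ := R.exists_eq_smul_sroot_of_reflect_notMem_pos hν hβ
      refine ⟨l, by simp, ?_⟩
      rw [R.reflect_smul hi hc hν.1, wordProd_cons, ← mul_assoc, R.reflect_mul_self hi, one_mul]

lemma len_reflect_mul_lt {w : V ≃ₗ[ℝ] V} (hw : w ∈ R.W) {ν : V} (hν : ν ∈ R.pos)
    (hinv : -(w⁻¹ ν) ∈ R.pos) : R.reflect ν * w ∈ R.W ∧ R.len (R.reflect ν * w) < R.len w := by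
  obtain ⟨l, rfl, hlen⟩ := R.exists_wordProd_eq_length_eq_len hw
  obtain ⟨l', hlt, hl'⟩ := R.exists_length_lt_wordProd_eq_reflect_mul l hν hinv
  refine ⟨hl' ▸ R.wordProd_mem_W l', ?_⟩
  calc R.len (R.reflect ν * R.wordProd l) ≤ l'.length := R.len_le_length hl'
    _ < l.length := hlt
    _ = R.len (R.wordProd l) := hlen

end RSD

/-- For a long positive root `μ`, the inversion set of the inverse of
the minimal-length element taking the highest root `θ` to `μ` is
`{ν ∈ Δ⁺ ∣ (ν, μ∨) = -1}`. -/
theorem inversion_set_of_inverse_of_w_theta_mu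
    {ι V : Type*} [Fintype ι] [NormedAddCommGroup V] [InnerProductSpace ℝ V]
    (R : RSD ι V) (θ μ : V) (hθ : R.IsHighest θ) (hμl : R.IsLong μ) (hμ : μ ∈ R.pos)
    (w : V ≃ₗ[ℝ] V) (hw : w ∈ R.W) (hwθ : w θ = μ)
    (hmin : ∀ w' ∈ R.W, w' θ = μ → R.len w ≤ R.len w') :
    R.N w⁻¹ = {ν ∈ R.pos | ⟪ν, R.coroot μ⟫ = -1} := by
  have hμμ := R.inner_self_pos_of_mem hμ.1
  have hpair (ν : V) : ⟪w⁻¹ ν, θ⟫ = ⟪ν, μ⟫ := by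
    rw [← R.inner_map_map_of_mem_W hw, hwθ, LinearEquiv.coe_inv, LinearEquiv.apply_symm_apply]
  ext ν
  refine ⟨fun ⟨hν, hinv⟩ => ⟨hν, ?_⟩, fun ⟨hν, hν'⟩ => ⟨hν, ?_⟩⟩
  · have hle : ⟪ν, μ⟫ ≤ 0 := by
      simpa only [inner_neg_left, hpair, neg_nonneg] using hθ.inner_nonneg hinv
    have hne : ν ≠ -μ := fun h => R.neg_notMem_pos hμ (h ▸ hν)
    refine (R.inner_coroot_eq_zero_or_eq_neg_one hμl hν.1 hne hle).resolve_left fun h0 => ?_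
    have hνμ : ⟪ν, μ⟫ = 0 := by
      rwa [R.inner_coroot, div_eq_zero_iff, or_iff_left hμμ.ne', mul_eq_zero,
        or_iff_right two_ne_zero, real_inner_comm] at h0
    have hfix : (R.reflect ν * w) θ = μ := by
      rw [LinearEquiv.mul_apply, hwθ, R.reflect_apply ν hν.1, hνμ]
      simp
    obtain ⟨hmem, hlt⟩ := R.len_reflect_mul_lt hw hν hinv
    exact (hmin _ hmem hfix).not_gt hlt
  · have hneg : ⟪w⁻¹ ν, θ⟫ < 0 := by
      rw [R.inner_coroot, div_eq_iff hμμ.ne'] at hν'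
      linarith [hpair ν, real_inner_comm μ ν]
    exact (R.pos_or_neg_mem_pos (R.map_mem_of_mem_W (inv_mem hw) hν.1)).resolve_left
      fun hpos => (hθ.inner_nonneg hpos).not_gt hneg
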